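/- (MSE-optimal fusion of two 1-D convolutional layers.) Fix an output channel p' ∈ {1,…,P}. Assume the input channels are uncorrelated and that the matrix U^{m'} ∈ ℝ^{k̃×k̃} is invertible for every m' ∈ {1,…,M}. Then the filters h̃^{m',p'} = (U^{m'})⁻¹ · z^{m',p'} for m' = 1,…,M, together with the bias b̃^{p'} = Σ_{n=1}^{N} h2^{n,p'} *_{s2} ā1^{n} + b2^{p'} − Σ_{m=1}^{M} h̃^{m,p'} *_{s̃} ā0^{m}, minimize C-MSE^{p'} over all choices of M filters in ℝ^{k̃} and bias in ℝ^{L2}. -/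

import Mathlib

open MeasureTheory Matrix

noncomputable section

/-- 1-based entry `j` of the zero-padded vector `Z(x) ∈ ℝ^{L+k-1}`, which pads
`x ∈ ℝ^L` with `⌊k/2⌋` zeros at the front and `⌊(k-1)/2⌋` zeros at the end
(entries outside `1,…,L+k-1` are also zero). -/
def padded {L : ℕ} (k : ℕ) (x : Fin L → ℝ) (j : ℤ) : ℝ :=
  if h : 1 ≤ j - ((k / 2 : ℕ) : ℤ) ∧ j - ((k / 2 : ℕ) : ℤ) ≤ (L : ℤ) then
    x ⟨(j - ((k / 2 : ℕ) : ℤ) - 1).toNat, by omega⟩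
  else 0

/-- 1-based entry `j` of `u = flip(Z(x))`. -/
def flipped {L : ℕ} (k : ℕ) (x : Fin L → ℝ) (j : ℤ) : ℝ :=
  padded k x ((L : ℤ) + (k : ℤ) - j)

/-- The subvector `u[L−i+1 : L−i+k]` of `u = flip(Z(x))`, as a vector in `ℝ^k`
(`i` is the 1-based stride position). -/
def window {L : ℕ} (k : ℕ) (x : Fin L → ℝ) (i : ℤ) : Fin k → ℝ :=
  fun a => flipped k x ((L : ℤ) - i + ((a : ℕ) : ℤ) + 1)

/-- Stride-`s` convolution `h *_s x` of a filter `h ∈ ℝ^k` with `x ∈ ℝ^L`: the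
`t`-th entry (0-based `t`, stride position `i = 1 + t·s`) equals
`(u[L−i+1 : L−i+k])ᵀ·h` with `u = flip(Z(x))`. The output length `T` should be
taken to be the number of stride positions `i = 1, 1+s, … ≤ L`. -/
def strideConv {L : ℕ} (k s T : ℕ) (h : Fin k → ℝ) (x : Fin L → ℝ) : Fin T → ℝ :=
  fun t => ∑ a : Fin k, window k x (1 + (t : ℕ) * s) a * h a

/-- Number of stride positions `i = 1, 1+s, 1+2s, … ≤ L`. -/
def numPos (L s : ℕ) : ℕ := (L + s - 1) / s

/-! The fused layer's prediction splits into a random part, linear in the filters `h̃` and built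
from the windows of the centered inputs, and a deterministic part into which the bias `b̃` enters
freely. Since every centered quantity has mean zero, the C-MSE is the mean squared error of the
random part plus the squared norm of the deterministic part; the prescribed bias kills the latter.
The random part is a least-squares regression of `v` on the windows: uncorrelated channels make
its normal equations block diagonal, with blocks `U^{m'} h̃^{m'} = z^{m'}`, and by Pythagoras a
solution of the normal equations minimizes the mean squared error. -/

open Finset

section Window

variable {L : ℕ}

lemma padded_eq_apply_or_eq_zero (k : ℕ) (j : ℤ) :
    (∃ i : Fin L, ∀ x : Fin L → ℝ, padded k x j = x i) ∨ ∀ x : Fin L → ℝ, padded k x j = 0 := by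
  by_cases h : 1 ≤ j - ((k / 2 : ℕ) : ℤ) ∧ j - ((k / 2 : ℕ) : ℤ) ≤ (L : ℤ)
  · exact .inl ⟨⟨_, by omega⟩, fun x => dif_pos h⟩
  · exact .inr fun x => dif_neg h

lemma window_apply_eq_or_eq_zero (k : ℕ) (i : ℤ) (a : Fin k) :
    (∃ j : Fin L, ∀ x : Fin L → ℝ, window k x i a = x j) ∨ ∀ x : Fin L → ℝ, window k x i a = 0 :=
  padded_eq_apply_or_eq_zero k _

lemma window_sub (k : ℕ) (x y : Fin L → ℝ) (i : ℤ) :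
    window k (fun j => x j - y j) i = window k x i - window k y i := by
  funext a
  rcases window_apply_eq_or_eq_zero (L := L) k i a with ⟨j, hj⟩ | h0
  · simp only [Pi.sub_apply, hj]
  · simp only [Pi.sub_apply, h0, sub_zero]

lemma strideConv_sub (k s T : ℕ) (h : Fin k → ℝ) (x y : Fin L → ℝ) :
    strideConv k s T h (fun j => x j - y j) = strideConv k s T h x - strideConv k s T h y := by
  funext t
  simp only [strideConv, window_sub, Pi.sub_apply, sub_mul, sum_sub_distrib]

variable {Ω : Type*} [MeasurableSpace Ω] {μ : Measure Ω}

lemma memLp_window {p : ENNReal} {x : Ω → Fin L → ℝ} (hx : ∀ j, MemLp (fun ω => x ω j) p μ)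
    (k : ℕ) (i : ℤ) (a : Fin k) : MemLp (fun ω => window k (x ω) i a) p μ := by
  rcases window_apply_eq_or_eq_zero (L := L) k i a with ⟨j, hj⟩ | h0
  · simpa only [hj] using hx j
  · simpa only [h0] using MemLp.zero'

lemma integral_window_eq_zero {x : Ω → Fin L → ℝ} (hx : ∀ j, ∫ ω, x ω j ∂μ = 0)
    (k : ℕ) (i : ℤ) (a : Fin k) : ∫ ω, window k (x ω) i a ∂μ = 0 := by
  rcases window_apply_eq_or_eq_zero (L := L) k i a with ⟨j, hj⟩ | h0
  · simpa only [hj] using hx j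
  · simp only [h0, integral_zero]

lemma integral_window_mul_window_eq_zero {L' : ℕ} {x : Ω → Fin L → ℝ} {y : Ω → Fin L' → ℝ}
    (hxy : ∀ j j', ∫ ω, x ω j * y ω j' ∂μ = 0) (k k' : ℕ) (i i' : ℤ) (a : Fin k) (a' : Fin k') :
    ∫ ω, window k (x ω) i a * window k' (y ω) i' a' ∂μ = 0 := by
  rcases window_apply_eq_or_eq_zero (L := L) k i a with ⟨j, hj⟩ | h0 <;>
    rcases window_apply_eq_or_eq_zero (L := L') k' i' a' with ⟨j', hj'⟩ | h0'
  · simpa only [hj, hj'] using hxy j j'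
  · simp only [h0', mul_zero, integral_zero]
  · simp only [h0, zero_mul, integral_zero]
  · simp only [h0, zero_mul, integral_zero]

end Window

section SquareIntegrable

variable {Ω ι : Type*} [MeasurableSpace Ω] {μ : Measure Ω} [Fintype ι]

lemma integrable_mul_of_memLp_two {f g : Ω → ℝ} (hf : MemLp f 2 μ) (hg : MemLp g 2 μ) :
    Integrable (fun ω => f ω * g ω) μ :=
  hf.integrable_mul hg

lemma memLp_two_sub_const [IsFiniteMeasure μ] {f : Ω → ℝ} (hf : Integrable f μ)
    (hff : Integrable (fun ω => f ω * f ω) μ) (c : ℝ) : MemLp (fun ω => f ω - c) 2 μ :=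
  ((memLp_two_iff_integrable_sq hf.aestronglyMeasurable).2 (by simpa only [sq] using hff)).sub
    (memLp_const c)

lemma integral_sub_integral_eq_zero [IsProbabilityMeasure μ] (f : Ω → ℝ) :
    ∫ ω, (f ω - ∫ ω', f ω' ∂μ) ∂μ = 0 := by
  simpa only [average_eq_integral] using integral_sub_average μ f

lemma integral_sum_add_sq_of_orthogonal {X Y : Ω → ι → ℝ}
    (hX : ∀ t, MemLp (fun ω => X ω t) 2 μ) (hY : ∀ t, MemLp (fun ω => Y ω t) 2 μ)
    (horth : ∫ ω, ∑ t, X ω t * Y ω t ∂μ = 0) :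
    ∫ ω, ∑ t, (X ω t + Y ω t) ^ 2 ∂μ = ∫ ω, ∑ t, X ω t ^ 2 ∂μ + ∫ ω, ∑ t, Y ω t ^ 2 ∂μ := by
  have hX2 := integrable_finsetSum univ fun t _ => (hX t).integrable_sq
  have hY2 := integrable_finsetSum univ fun t _ => (hY t).integrable_sq
  have hXY := integrable_finsetSum univ fun t _ => integrable_mul_of_memLp_two (hX t) (hY t)
  have hexpand : (fun ω => ∑ t, (X ω t + Y ω t) ^ 2)
      = fun ω => (∑ t, X ω t ^ 2 + ∑ t, Y ω t ^ 2) + 2 * ∑ t, X ω t * Y ω t := by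
    funext ω
    simp only [← sum_add_distrib, mul_sum]
    exact sum_congr rfl fun t _ => by ring
  have hX2Y2 : Integrable (fun ω => ∑ t, X ω t ^ 2 + ∑ t, Y ω t ^ 2) μ := hX2.add hY2
  rw [hexpand, integral_add hX2Y2 (hXY.const_mul 2), integral_add hX2 hY2,
    integral_const_mul, horth, mul_zero, add_zero]

lemma integral_sum_add_const_sq [IsProbabilityMeasure μ] {X : Ω → ι → ℝ}
    (hX : ∀ t, MemLp (fun ω => X ω t) 2 μ) (hX0 : ∀ t, ∫ ω, X ω t ∂μ = 0) (c : ι → ℝ) :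
    ∫ ω, ∑ t, (X ω t + c t) ^ 2 ∂μ = ∫ ω, ∑ t, X ω t ^ 2 ∂μ + ∑ t, c t ^ 2 := by
  have horth : ∫ ω, ∑ t, X ω t * c t ∂μ = 0 := by
    rw [integral_finsetSum univ fun t _ => ((hX t).integrable one_le_two).mul_const _]
    simp only [integral_mul_const, hX0, zero_mul, sum_const_zero]
  rw [integral_sum_add_sq_of_orthogonal hX (fun t => memLp_const (c t)) horth, integral_const,
    probReal_univ, one_smul]

end SquareIntegrable

section LinComb

variable {Ω ι J K : Type*} [Fintype J] [Fintype K]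

def linComb (F : J → K → Ω → ι → ℝ) (g : J → K → ℝ) (ω : Ω) (t : ι) : ℝ :=
  ∑ j, ∑ a, F j a ω t * g j a

lemma linComb_sub (F : J → K → Ω → ι → ℝ) (g g' : J → K → ℝ) (ω : Ω) (t : ι) :
    linComb F g ω t - linComb F g' ω t = linComb F (g - g') ω t := by
  simp only [linComb, ← sum_sub_distrib, Pi.sub_apply, mul_sub]

variable [MeasurableSpace Ω] {μ : Measure Ω}

lemma memLp_linComb {p : ENNReal} {F : J → K → Ω → ι → ℝ}
    (hF : ∀ j a t, MemLp (fun ω => F j a ω t) p μ) (g : J → K → ℝ) (t : ι) :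
    MemLp (fun ω => linComb F g ω t) p μ :=
  memLp_finsetSum univ fun j _ => memLp_finsetSum univ fun a _ => (hF j a t).mul_const _

lemma integral_linComb_eq_zero {F : J → K → Ω → ι → ℝ}
    (hF : ∀ j a t, Integrable (fun ω => F j a ω t) μ) (hF0 : ∀ j a t, ∫ ω, F j a ω t ∂μ = 0)
    (g : J → K → ℝ) (t : ι) : ∫ ω, linComb F g ω t ∂μ = 0 := by
  simp only [linComb]
  rw [integral_finsetSum univ fun j _ => integrable_finsetSum univ fun a _ =>
    (hF j a t).mul_const _]
  refine sum_eq_zero fun j _ => ?_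
  rw [integral_finsetSum univ fun a _ => (hF j a t).mul_const _]
  simp only [integral_mul_const, hF0, zero_mul, sum_const_zero]

variable [Fintype ι]

lemma integral_sum_mul_linComb {X : Ω → ι → ℝ} {F : J → K → Ω → ι → ℝ}
    (hXF : ∀ j a t, Integrable (fun ω => X ω t * F j a ω t) μ) (g : J → K → ℝ) :
    ∫ ω, ∑ t, X ω t * linComb F g ω t ∂μ
      = ∑ j, ∑ a, (∫ ω, ∑ t, X ω t * F j a ω t ∂μ) * g j a := by
  have hswap : (fun ω => ∑ t, X ω t * linComb F g ω t)
      = fun ω => ∑ j, ∑ a, (∑ t, X ω t * F j a ω t) * g j a := by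
    funext ω
    simp only [linComb, mul_sum, sum_mul]
    rw [sum_comm]
    refine sum_congr rfl fun j _ => ?_
    rw [sum_comm]
    exact sum_congr rfl fun a _ => sum_congr rfl fun t _ => by ring
  have hint : ∀ j a, Integrable (fun ω => (∑ t, X ω t * F j a ω t) * g j a) μ :=
    fun j a => (integrable_finsetSum univ fun t _ => hXF j a t).mul_const _
  rw [hswap, integral_finsetSum univ fun j _ => integrable_finsetSum univ fun a _ => hint j a]
  refine sum_congr rfl fun j _ => ?_
  rw [integral_finsetSum univ fun a _ => hint j a]
  simp only [integral_mul_const]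

variable {Y : Ω → ι → ℝ} {F : J → K → Ω → ι → ℝ}

lemma integral_sum_sub_linComb_add_const_sq [IsProbabilityMeasure μ]
    (hY : ∀ t, MemLp (fun ω => Y ω t) 2 μ) (hY0 : ∀ t, ∫ ω, Y ω t ∂μ = 0)
    (hF : ∀ j a t, MemLp (fun ω => F j a ω t) 2 μ) (hF0 : ∀ j a t, ∫ ω, F j a ω t ∂μ = 0)
    (g : J → K → ℝ) (c : ι → ℝ) :
    ∫ ω, ∑ t, (Y ω t - linComb F g ω t + c t) ^ 2 ∂μ
      = ∫ ω, ∑ t, (Y ω t - linComb F g ω t) ^ 2 ∂μ + ∑ t, c t ^ 2 := by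
  have hres : ∀ t, MemLp (fun ω => Y ω t - linComb F g ω t) 2 μ :=
    fun t => (hY t).sub (memLp_linComb hF g t)
  refine integral_sum_add_const_sq hres (fun t => ?_) c
  rw [integral_sub ((hY t).integrable one_le_two) ((memLp_linComb hF g t).integrable one_le_two),
    hY0, integral_linComb_eq_zero (fun j a t => (hF j a t).integrable one_le_two) hF0, sub_zero]

/-- Uncorrelated channels decouple the normal equations into one system `U j *ᵥ h j = z j` per
channel `j`. -/
lemma integral_sum_sub_linComb_mul_eq_zero [DecidableEq K]
    (hY : ∀ t, MemLp (fun ω => Y ω t) 2 μ) (hF : ∀ j a t, MemLp (fun ω => F j a ω t) 2 μ)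
    (huncorr : ∀ j j', j ≠ j' → ∀ a a' t, ∫ ω, F j a ω t * F j' a' ω t ∂μ = 0)
    {U : J → Matrix K K ℝ} (hU : ∀ j a b, U j a b = ∫ ω, ∑ t, F j a ω t * F j b ω t ∂μ)
    {z : J → K → ℝ} (hz : ∀ j a, z j a = ∫ ω, ∑ t, Y ω t * F j a ω t ∂μ)
    (hUunit : ∀ j, IsUnit (U j)) {h : J → K → ℝ} (hh : ∀ j, h j = (U j)⁻¹ *ᵥ z j) (j : J) (a : K) :
    ∫ ω, ∑ t, (Y ω t - linComb F h ω t) * F j a ω t ∂μ = 0 := by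
  have hUh : U j *ᵥ h j = z j := by
    rw [hh, mulVec_mulVec, mul_nonsing_inv _ ((isUnit_iff_isUnit_det _).mp (hUunit j)),
      one_mulVec]
  have hcross : ∫ ω, ∑ t, F j a ω t * linComb F h ω t ∂μ = (U j *ᵥ h j) a := by
    rw [integral_sum_mul_linComb fun j' a' t => integrable_mul_of_memLp_two (hF j a t) (hF j' a' t),
      sum_eq_single j]
    · simp only [mulVec, dotProduct, hU]
    · intro j' _ hj'
      refine sum_eq_zero fun a' _ => ?_
      rw [integral_finsetSum univ fun t _ => integrable_mul_of_memLp_two (hF j a t) (hF j' a' t),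
        sum_eq_zero fun t _ => huncorr j j' (Ne.symm hj') a a' t, zero_mul]
    · exact fun hj => absurd (mem_univ j) hj
  have hsplit : (fun ω => ∑ t, (Y ω t - linComb F h ω t) * F j a ω t)
      = fun ω => ∑ t, Y ω t * F j a ω t - ∑ t, F j a ω t * linComb F h ω t := by
    funext ω
    rw [← sum_sub_distrib]
    exact sum_congr rfl fun t _ => by ring
  have hYF := integrable_finsetSum univ fun t _ => integrable_mul_of_memLp_two (hY t) (hF j a t)
  have hFh := integrable_finsetSum univ fun t _ =>
    integrable_mul_of_memLp_two (hF j a t) (memLp_linComb hF h t)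
  rw [hsplit, integral_sub hYF hFh, hcross, hUh, hz, sub_self]

theorem integral_sum_sub_linComb_sq_le
    (hY : ∀ t, MemLp (fun ω => Y ω t) 2 μ) (hF : ∀ j a t, MemLp (fun ω => F j a ω t) 2 μ)
    {h : J → K → ℝ} (hnormal : ∀ j a, ∫ ω, ∑ t, (Y ω t - linComb F h ω t) * F j a ω t ∂μ = 0)
    (g : J → K → ℝ) :
    ∫ ω, ∑ t, (Y ω t - linComb F h ω t) ^ 2 ∂μ ≤ ∫ ω, ∑ t, (Y ω t - linComb F g ω t) ^ 2 ∂μ := by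
  have hres : ∀ t, MemLp (fun ω => Y ω t - linComb F h ω t) 2 μ :=
    fun t => (hY t).sub (memLp_linComb hF h t)
  have horth : ∫ ω, ∑ t, (Y ω t - linComb F h ω t) * linComb F (h - g) ω t ∂μ = 0 := by
    rw [integral_sum_mul_linComb fun j a t => integrable_mul_of_memLp_two (hres t) (hF j a t)]
    simp only [hnormal, zero_mul, sum_const_zero]
  have hdecomp : ∀ ω t, Y ω t - linComb F g ω t
      = (Y ω t - linComb F h ω t) + linComb F (h - g) ω t := by
    intro ω t
    rw [← linComb_sub]
    ring
  simp only [hdecomp]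
  rw [integral_sum_add_sq_of_orthogonal hres (memLp_linComb hF (h - g)) horth]
  exact le_add_of_nonneg_right (integral_nonneg fun ω => sum_nonneg fun t _ => sq_nonneg _)

end LinComb

section CenteredWindows

variable {Ω J : Type*} {L : ℕ}

/-- The windows `u^{j}[L−i+1 : L−i+k]`, at stride positions `i = 1 + t * s`, of the centered
inputs `x j ω - xbar j`: the vectors entering `U` and `z`. -/
def centeredWindows (k s T : ℕ) (x : J → Ω → Fin L → ℝ) (xbar : J → Fin L → ℝ) :
    J → Fin k → Ω → Fin T → ℝ :=
  fun j a ω t => window k (fun i => x j ω i - xbar j i) (1 + (t : ℕ) * s) a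

lemma sum_strideConv_apply_eq_linComb [Fintype J] {k s T : ℕ} (h : J → Fin k → ℝ)
    (x : J → Ω → Fin L → ℝ) (xbar : J → Fin L → ℝ) (ω : Ω) (t : Fin T) :
    (∑ j, strideConv k s T (h j) (fun i => x j ω i - xbar j i)) t
      = linComb (centeredWindows k s T x xbar) h ω t := by
  rw [Finset.sum_apply]
  rfl

lemma sum_strideConv_apply_eq_linComb_add [Fintype J] {k s T : ℕ} (h : J → Fin k → ℝ)
    (x : J → Ω → Fin L → ℝ) (xbar : J → Fin L → ℝ) (ω : Ω) (t : Fin T) :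
    (∑ j, strideConv k s T (h j) (x j ω)) t
      = linComb (centeredWindows k s T x xbar) h ω t
        + (∑ j, strideConv k s T (h j) (xbar j)) t := by
  rw [← sum_strideConv_apply_eq_linComb]
  simp only [strideConv_sub, Finset.sum_apply, Pi.sub_apply, ← sum_add_distrib, sub_add_cancel]

variable [MeasurableSpace Ω] {μ : Measure Ω} (k s T : ℕ) {x : J → Ω → Fin L → ℝ}
  {xbar : J → Fin L → ℝ}

lemma memLp_centeredWindows [IsFiniteMeasure μ] (hx : ∀ j i, Integrable (fun ω => x j ω i) μ)
    (hxx : ∀ j i, Integrable (fun ω => x j ω i * x j ω i) μ) (j : J) (a : Fin k) (t : Fin T) :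
    MemLp (fun ω => centeredWindows k s T x xbar j a ω t) 2 μ :=
  memLp_window (fun i => memLp_two_sub_const (hx j i) (hxx j i) _) _ _ _

lemma integral_centeredWindows_eq_zero [IsProbabilityMeasure μ]
    (hxbar : ∀ j i, xbar j i = ∫ ω, x j ω i ∂μ) (j : J) (a : Fin k) (t : Fin T) :
    ∫ ω, centeredWindows k s T x xbar j a ω t ∂μ = 0 :=
  integral_window_eq_zero (fun i => by simpa only [hxbar] using integral_sub_integral_eq_zero _)
    _ _ _

lemma integral_centeredWindows_mul_eq_zero
    (huncorr : ∀ j j', j ≠ j' → ∀ i i',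
      ∫ ω, (x j ω i - xbar j i) * (x j' ω i' - xbar j' i') ∂μ = 0)
    (j j' : J) (hj : j ≠ j') (a a' : Fin k) (t : Fin T) :
    ∫ ω, centeredWindows k s T x xbar j a ω t * centeredWindows k s T x xbar j' a' ω t ∂μ = 0 :=
  integral_window_mul_window_eq_zero (huncorr j j' hj) _ _ _ _ _ _

end CenteredWindows

theorem fuseinit_conv_optimal_general
    {Ω : Type*} [MeasurableSpace Ω] (μ : Measure Ω) [IsProbabilityMeasure μ]
    {M N L0 L1 L2 k2 ktil : ℕ} (s2 stil : ℕ)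
    (a0 : Fin M → Ω → Fin L0 → ℝ) (a1 : Fin N → Ω → Fin L1 → ℝ)
    (hInt0 : ∀ m i, Integrable (fun ω => a0 m ω i) μ)
    (hInt1 : ∀ n i, Integrable (fun ω => a1 n ω i) μ)
    (hInt00 : ∀ m m' i j, Integrable (fun ω => a0 m ω i * a0 m' ω j) μ)
    (hInt11 : ∀ n n' i j, Integrable (fun ω => a1 n ω i * a1 n' ω j) μ)
    (abar0 : Fin M → Fin L0 → ℝ) (habar0 : ∀ m i, abar0 m i = ∫ ω, a0 m ω i ∂μ)
    (abar1 : Fin N → Fin L1 → ℝ) (habar1 : ∀ n i, abar1 n i = ∫ ω, a1 n ω i ∂μ)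
    (h2 : Fin N → Fin k2 → ℝ) (b2 : Fin L2 → ℝ)
    (huncorr : ∀ m m', m ≠ m' → ∀ i j,
      ∫ ω, (a0 m ω i - abar0 m i) * (a0 m' ω j - abar0 m' j) ∂μ = 0)
    (v : Ω → Fin L2 → ℝ)
    (hv : ∀ ω, v ω = ∑ n, strideConv k2 s2 L2 (h2 n) (fun j => a1 n ω j - abar1 n j))
    (U : Fin M → Matrix (Fin ktil) (Fin ktil) ℝ)
    (hU : ∀ m a b, U m a b = ∫ ω, ∑ t : Fin L2,
      window ktil (fun j => a0 m ω j - abar0 m j) (1 + (t : ℕ) * stil) a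
        * window ktil (fun j => a0 m ω j - abar0 m j) (1 + (t : ℕ) * stil) b ∂μ)
    (z : Fin M → Fin ktil → ℝ)
    (hz : ∀ m a, z m a = ∫ ω, ∑ t : Fin L2,
      v ω t * window ktil (fun j => a0 m ω j - abar0 m j) (1 + (t : ℕ) * stil) a ∂μ)
    (hUunit : ∀ m, IsUnit (U m))
    (CMSE : (Fin M → Fin ktil → ℝ) → (Fin L2 → ℝ) → ℝ)
    (hCMSE : ∀ g b, CMSE g b = ∫ ω, ∑ t : Fin L2,
      (((∑ n, strideConv k2 s2 L2 (h2 n) (a1 n ω)) + b2) t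
        - ((∑ m, strideConv ktil stil L2 (g m) (a0 m ω)) + b) t) ^ 2 ∂μ)
    (hopt : Fin M → Fin ktil → ℝ) (hhopt : ∀ m, hopt m = (U m)⁻¹.mulVec (z m))
    (bopt : Fin L2 → ℝ)
    (hbopt : bopt = (∑ n, strideConv k2 s2 L2 (h2 n) (abar1 n)) + b2
      - ∑ m, strideConv ktil stil L2 (hopt m) (abar0 m)) :
    ∀ (g : Fin M → Fin ktil → ℝ) (b : Fin L2 → ℝ), CMSE hopt bopt ≤ CMSE g b := by
  intro g b
  let F := centeredWindows ktil stil L2 a0 abar0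
  let G := centeredWindows k2 s2 L2 a1 abar1
  have hF := memLp_centeredWindows ktil stil L2 hInt0 (fun m i => hInt00 m m i i) (xbar := abar0)
  have hG := memLp_centeredWindows k2 s2 L2 hInt1 (fun n i => hInt11 n n i i) (xbar := abar1)
  have hF0 := integral_centeredWindows_eq_zero ktil stil L2 habar0
  have hvG : ∀ ω t, v ω t = linComb G h2 ω t := fun ω t => by
    rw [hv, sum_strideConv_apply_eq_linComb]
  have hv2 : ∀ t, MemLp (fun ω => v ω t) 2 μ := by simpa only [hvG] using memLp_linComb hG h2
  have hv0 : ∀ t, ∫ ω, v ω t ∂μ = 0 := by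
    simpa only [hvG] using integral_linComb_eq_zero (fun n a t => (hG n a t).integrable one_le_two)
      (integral_centeredWindows_eq_zero k2 s2 L2 habar1) h2
  have hdecomp : ∀ g b, CMSE g b = ∫ ω, ∑ t, (v ω t - linComb F g ω t) ^ 2 ∂μ
      + ∑ t, (((∑ n, strideConv k2 s2 L2 (h2 n) (abar1 n)) + b2) t
        - ((∑ m, strideConv ktil stil L2 (g m) (abar0 m)) + b) t) ^ 2 := by
    intro g b
    rw [hCMSE, ← integral_sum_sub_linComb_add_const_sq hv2 hv0 hF hF0]
    refine integral_congr_ae (ae_of_all _ fun ω => sum_congr rfl fun t _ => ?_)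
    simp only [Pi.add_apply]
    rw [sum_strideConv_apply_eq_linComb_add h2 a1 abar1,
      sum_strideConv_apply_eq_linComb_add g a0 abar0, ← hvG]
    ring
  have hnormal := integral_sum_sub_linComb_mul_eq_zero hv2 hF
    (integral_centeredWindows_mul_eq_zero ktil stil L2 huncorr) hU hz hUunit hhopt
  calc CMSE hopt bopt = ∫ ω, ∑ t, (v ω t - linComb F hopt ω t) ^ 2 ∂μ := by
        rw [hdecomp, hbopt, add_eq_left]
        exact sum_eq_zero fun t _ => by simp only [Pi.add_apply, Pi.sub_apply]; ring
    _ ≤ ∫ ω, ∑ t, (v ω t - linComb F g ω t) ^ 2 ∂μ :=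
        integral_sum_sub_linComb_sq_le hv2 hF hnormal g
    _ ≤ CMSE g b := by
        rw [hdecomp g b]
        exact le_add_of_nonneg_right (sum_nonneg fun t _ => sq_nonneg _)

/-- **MSE-optimal fusion of two 1-D convolutional layers (Theorem 2 of FuseInit).**
Assume the input channels are uncorrelated and each matrix `U^{m'}` is invertible.
Then the filters `h̃^{m',p'} = (U^{m'})⁻¹ · z^{m',p'}` together with the bias
`b̃^{p'} = Σₙ h2^{n,p'} *_{s2} ā1ⁿ + b2^{p'} − Σₘ h̃^{m,p'} *_{s̃} ā0ᵐ`
minimize `C-MSE^{p'}` over all choices of `M` filters in `ℝ^{k̃}` and bias in `ℝ^{L2}`. -/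
theorem fuseinit_conv_optimal
    {Ω : Type*} [MeasurableSpace Ω] (μ : Measure Ω) [IsProbabilityMeasure μ]
    {M N L0 L1 L2 k2 ktil : ℕ} (s2 stil : ℕ) (hs2 : 0 < s2) (hstil : 0 < stil)
    (hL2 : L2 = numPos L1 s2) (hL2' : L2 = numPos L0 stil)
    (a0 : Fin M → Ω → Fin L0 → ℝ) (a1 : Fin N → Ω → Fin L1 → ℝ)
    (hInt0 : ∀ m i, Integrable (fun ω => a0 m ω i) μ)
    (hInt1 : ∀ n i, Integrable (fun ω => a1 n ω i) μ)
    (hInt00 : ∀ m m' i j, Integrable (fun ω => a0 m ω i * a0 m' ω j) μ)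
    (hInt11 : ∀ n n' i j, Integrable (fun ω => a1 n ω i * a1 n' ω j) μ)
    (hInt10 : ∀ n m i j, Integrable (fun ω => a1 n ω i * a0 m ω j) μ)
    (abar0 : Fin M → Fin L0 → ℝ) (habar0 : ∀ m i, abar0 m i = ∫ ω, a0 m ω i ∂μ)
    (abar1 : Fin N → Fin L1 → ℝ) (habar1 : ∀ n i, abar1 n i = ∫ ω, a1 n ω i ∂μ)
    (h2 : Fin N → Fin k2 → ℝ) (b2 : Fin L2 → ℝ)
    (huncorr : ∀ m m', m ≠ m' → ∀ i j,
      ∫ ω, (a0 m ω i - abar0 m i) * (a0 m' ω j - abar0 m' j) ∂μ = 0)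
    (v : Ω → Fin L2 → ℝ)
    (hv : ∀ ω, v ω = ∑ n, strideConv k2 s2 L2 (h2 n) (fun j => a1 n ω j - abar1 n j))
    (U : Fin M → Matrix (Fin ktil) (Fin ktil) ℝ)
    (hU : ∀ m a b, U m a b = ∫ ω, ∑ t : Fin L2,
      window ktil (fun j => a0 m ω j - abar0 m j) (1 + (t : ℕ) * stil) a
        * window ktil (fun j => a0 m ω j - abar0 m j) (1 + (t : ℕ) * stil) b ∂μ)
    (z : Fin M → Fin ktil → ℝ)
    (hz : ∀ m a, z m a = ∫ ω, ∑ t : Fin L2,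
      v ω t * window ktil (fun j => a0 m ω j - abar0 m j) (1 + (t : ℕ) * stil) a ∂μ)
    (hUunit : ∀ m, IsUnit (U m))
    (CMSE : (Fin M → Fin ktil → ℝ) → (Fin L2 → ℝ) → ℝ)
    (hCMSE : ∀ g b, CMSE g b = ∫ ω, ∑ t : Fin L2,
      (((∑ n, strideConv k2 s2 L2 (h2 n) (a1 n ω)) + b2) t
        - ((∑ m, strideConv ktil stil L2 (g m) (a0 m ω)) + b) t) ^ 2 ∂μ)
    (hopt : Fin M → Fin ktil → ℝ) (hhopt : ∀ m, hopt m = (U m)⁻¹.mulVec (z m))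
    (bopt : Fin L2 → ℝ)
    (hbopt : bopt = (∑ n, strideConv k2 s2 L2 (h2 n) (abar1 n)) + b2
      - ∑ m, strideConv ktil stil L2 (hopt m) (abar0 m)) :
    ∀ (g : Fin M → Fin ktil → ℝ) (b : Fin L2 → ℝ), CMSE hopt bopt ≤ CMSE g b :=
  fuseinit_conv_optimal_general μ s2 stil a0 a1 hInt0 hInt1 hInt00 hInt11 abar0 habar0 abar1 habar1
    h2 b2 huncorr v hv U hU z hz hUunit CMSE hCMSE hopt hhopt bopt hbopt

end
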